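/- Let σ be an involution of {1,…,r} with permutation matrix C over a field 𝔽. Let I_1,…,I_T be pairwise disjoint subsets of {1,…,K}, each of size r, enumerated by bijections b_i : {1,…,r} → I_i. Let F_X be an L×K fitting pattern, G an r×K matrix, and D an L×r matrix with DG fitting F_X; suppose that for each i the r×r matrix A_i whose k-th column is the b_i(k)-th column of G commutes with C. Define the L×K X-pattern B whose entry at (l, j) is 0 if j = b_i(k) for some i and k with F_X(l, b_i(σ(k))) = 0, and X otherwise. Then the 2L×r matrix D' obtained by stacking D on top of DC satisfies: D'·(G | CG) fits the 2L×2K block pattern (F_X B; B F_X), so (G | CG) is a scalar linear index code of length r for the extension problem; moreover, if r = minrk(F_X), then minrk((F_X B; B F_X)) = minrk(F_X), i.e., the extension is rank-invariant. -/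

import Mathlib

/-!
Because `A_i` commutes with the permutation matrix `C`, column `b_i(k)` of `C G` is column
`b_i(σ k)` of `G`; hence `D (C G)` is `D G` with its columns permuted inside each block and
vanishes wherever `B` has a `0`. As `C² = 1`, the product `(D; DC)(G | CG)` is the block matrix
`(DG, DCG; DCG, DG)`, which fits `(F_X B; B F_X)` and has rank at most `r`. Conversely, every
matrix fitting the extension has its top-left block fitting `F_X`, so the minrank cannot drop.
-/

open Matrix

/-- A pattern entry: `some false` = 0, `some true` = 1, `none` = X. -/
abbrev PatEntry := Option Bool

/-- A matrix `M` fits a pattern `P` if `M` is `0` at every `0`-entry of `P`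
and `1` at every `1`-entry of `P` (X-entries are unconstrained). -/
def Fits {L K 𝔽 : Type*} [Zero 𝔽] [One 𝔽]
    (P : Matrix L K PatEntry) (M : Matrix L K 𝔽) : Prop :=
  ∀ i j, (P i j = some false → M i j = 0) ∧ (P i j = some true → M i j = 1)

/-- The minrank of a pattern over the field `𝔽`. -/
noncomputable def minrk (𝔽 : Type*) [Field 𝔽] {L K : Type*} [Fintype K]
    (P : Matrix L K PatEntry) : ℕ :=
  sInf {n | ∃ M : Matrix L K 𝔽, Fits P M ∧ M.rank = n}

section PatternFitting

variable {m n m' n' 𝔽 : Type*}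

theorem Fits.fromBlocks [Zero 𝔽] [One 𝔽]
    {P₁₁ : Matrix m n PatEntry} {P₁₂ : Matrix m n' PatEntry}
    {P₂₁ : Matrix m' n PatEntry} {P₂₂ : Matrix m' n' PatEntry}
    {M₁₁ : Matrix m n 𝔽} {M₁₂ : Matrix m n' 𝔽} {M₂₁ : Matrix m' n 𝔽} {M₂₂ : Matrix m' n' 𝔽}
    (h₁₁ : Fits P₁₁ M₁₁) (h₁₂ : Fits P₁₂ M₁₂) (h₂₁ : Fits P₂₁ M₂₁) (h₂₂ : Fits P₂₂ M₂₂) :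
    Fits (Matrix.fromBlocks P₁₁ P₁₂ P₂₁ P₂₂) (Matrix.fromBlocks M₁₁ M₁₂ M₂₁ M₂₂) := by
  rintro (l | l) (j | j)
  exacts [h₁₁ l j, h₁₂ l j, h₂₁ l j, h₂₂ l j]

theorem Fits.toBlocks₁₁ [Zero 𝔽] [One 𝔽]
    {P₁₁ : Matrix m n PatEntry} {P₁₂ : Matrix m n' PatEntry}
    {P₂₁ : Matrix m' n PatEntry} {P₂₂ : Matrix m' n' PatEntry}
    {M : Matrix (m ⊕ m') (n ⊕ n') 𝔽} (h : Fits (Matrix.fromBlocks P₁₁ P₁₂ P₂₁ P₂₂) M) :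
    Fits P₁₁ M.toBlocks₁₁ :=
  fun l j => h (.inl l) (.inl j)

theorem fits_of_columns_permuted_in_blocks [Zero 𝔽] [One 𝔽] {ι κ : Type*}
    {P B : Matrix m n PatEntry} {M N : Matrix m n 𝔽} (b : ι → κ → n) (σ : κ → κ)
    [∀ l j, Decidable (∃ i k, j = b i k ∧ P l (b i (σ k)) = some false)]
    (hM : Fits P M) (hN : ∀ l i k, N l (b i k) = M l (b i (σ k)))
    (hB : ∀ l j, B l j =
      if ∃ i k, j = b i k ∧ P l (b i (σ k)) = some false then some false else none) :
    Fits B N := by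
  intro l j
  rw [hB l j]
  split_ifs with hzero
  · obtain ⟨i, k, rfl, hP⟩ := hzero
    exact ⟨fun _ => (hN l i k).trans ((hM l (b i (σ k))).1 hP), by simp⟩
  · simp

theorem minrk_le_rank [Field 𝔽] [Fintype n] {P : Matrix m n PatEntry} {M : Matrix m n 𝔽}
    (h : Fits P M) : minrk 𝔽 P ≤ M.rank :=
  Nat.sInf_le ⟨M, h, rfl⟩

theorem minrk_le_minrk_fromBlocks [Field 𝔽] [Fintype n] [Fintype n']
    (P₁₁ : Matrix m n PatEntry) (P₁₂ : Matrix m n' PatEntry)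
    (P₂₁ : Matrix m' n PatEntry) (P₂₂ : Matrix m' n' PatEntry)
    (hfit : ∃ M : Matrix (m ⊕ m') (n ⊕ n') 𝔽, Fits (Matrix.fromBlocks P₁₁ P₁₂ P₂₁ P₂₂) M) :
    minrk 𝔽 P₁₁ ≤ minrk 𝔽 (Matrix.fromBlocks P₁₁ P₁₂ P₂₁ P₂₂) := by
  -- without a fitting matrix the right side would be the junk value `sInf ∅ = 0`
  obtain ⟨M₀, hM₀⟩ := hfit
  refine le_csInf ⟨M₀.rank, M₀, hM₀, rfl⟩ ?_
  rintro _ ⟨M, hM, rfl⟩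
  exact (minrk_le_rank hM.toBlocks₁₁).trans (rank_submatrix_le M Sum.inl Sum.inl)

end PatternFitting

section PermutationMatrix

variable {n α κ R : Type*} [Fintype n] [DecidableEq n] [NonAssocSemiring R]
  {σ : n → n} {C : Matrix n n R}

theorem mul_apply_eq_of_perm (hC : ∀ i j, C i j = if i = σ j then 1 else 0)
    (M : Matrix α n R) (s : α) (k : n) : (M * C) s k = M s (σ k) := by
  simp [mul_apply, hC]

theorem mul_self_eq_one_of_involutive (hC : ∀ i j, C i j = if i = σ j then 1 else 0)
    (hσ : Function.Involutive σ) : C * C = 1 := by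
  ext i j
  rw [mul_apply_eq_of_perm hC, hC, hσ, one_apply]

theorem mul_apply_eq_of_commute_submatrix (hC : ∀ i j, C i j = if i = σ j then 1 else 0)
    (G : Matrix n κ R) (c : n → κ) (hcomm : G.submatrix id c * C = C * G.submatrix id c)
    (s k : n) : (C * G) s (c k) = G s (c (σ k)) := by
  calc (C * G) s (c k) = (C * G.submatrix id c) s k := rfl
    _ = G s (c (σ k)) := by rw [← hcomm, mul_apply_eq_of_perm hC]; rfl

end PermutationMatrix

open Classical in
theorem two_order_extension_of_commuting_blocks_general {L K r T : ℕ} {𝔽 : Type*} [Field 𝔽]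
    (σ : Equiv.Perm (Fin r)) (hσ : ∀ i, σ (σ i) = i)
    (C : Matrix (Fin r) (Fin r) 𝔽)
    (hC : ∀ i j, C i j = if i = σ j then 1 else 0)
    (b : Fin T → Fin r → Fin K)
    (FX : Matrix (Fin L) (Fin K) PatEntry)
    (G : Matrix (Fin r) (Fin K) 𝔽) (D : Matrix (Fin L) (Fin r) 𝔽)
    (hDG : Fits FX (D * G))
    (hcomm : ∀ i : Fin T,
      (Matrix.of fun s k => G s (b i k)) * C = C * Matrix.of fun s k => G s (b i k))
    (B : Matrix (Fin L) (Fin K) PatEntry)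
    (hBdef : ∀ l j, B l j =
      if ∃ i k, j = b i k ∧ FX l (b i (σ k)) = some false then some false else none) :
    Fits (Matrix.fromBlocks FX B B FX)
      (Matrix.fromRows D (D * C) * Matrix.fromCols G (C * G)) ∧
    (∃ D' : Matrix (Fin L ⊕ Fin L) (Fin r) 𝔽,
        Fits (Matrix.fromBlocks FX B B FX) (D' * Matrix.fromCols G (C * G))) ∧
    (r = minrk 𝔽 FX →
        minrk 𝔽 (Matrix.fromBlocks FX B B FX) = minrk 𝔽 FX) := by
  have hCC : C * C = 1 := mul_self_eq_one_of_involutive hC hσ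
  have hoff : Fits B (D * (C * G)) := by
    refine fits_of_columns_permuted_in_blocks b σ hDG (fun l i k => ?_) hBdef
    simp only [mul_apply (M := D), mul_apply_eq_of_commute_submatrix hC G (b i) (hcomm i)]
  have hblocks : fromRows D (D * C) * fromCols G (C * G)
      = fromBlocks (D * G) (D * (C * G)) (D * (C * G)) (D * G) := by
    rw [fromRows_mul_fromCols, Matrix.mul_assoc, Matrix.mul_assoc, ← Matrix.mul_assoc C, hCC,
      Matrix.one_mul]
  have hfit : Fits (fromBlocks FX B B FX) (fromRows D (D * C) * fromCols G (C * G)) := by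
    rw [hblocks]
    exact hDG.fromBlocks hoff hoff hDG
  refine ⟨hfit, ⟨_, hfit⟩, fun hr => le_antisymm ?_ (minrk_le_minrk_fromBlocks _ _ _ _ ⟨_, hfit⟩)⟩
  calc minrk 𝔽 (fromBlocks FX B B FX) ≤ (fromRows D (D * C) * fromCols G (C * G)).rank :=
        minrk_le_rank hfit
    _ ≤ Fintype.card (Fin r) := (rank_mul_le_left _ _).trans (rank_le_card_width _)
    _ = minrk 𝔽 FX := (Fintype.card_fin r).trans hr

open Classical in
/-- Suppose `D * G` fits `FX` and, for each of the disjoint column blocks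
`I_i = range (b i)`, the `r × r` submatrix `A_i` of `G` commutes with the
permutation matrix `C` of the involution `σ`.  Let `B` be the X-pattern obtained
from `FX` by permuting the columns within each block according to `σ`, filling the
remaining columns with `X`, and X-ing out the `1`s.  Then `(D; DC) * (G | CG)` fits
the block pattern `(FX B; B FX)`, so `(G | CG)` is a scalar linear index code of
length `r` for the extension; moreover if `r = minrk FX` the extension is
rank-invariant. -/
theorem two_order_extension_of_commuting_blocks {L K r T : ℕ} {𝔽 : Type*} [Field 𝔽]
    (σ : Equiv.Perm (Fin r)) (hσ : ∀ i, σ (σ i) = i)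
    (C : Matrix (Fin r) (Fin r) 𝔽)
    (hC : ∀ i j, C i j = if i = σ j then 1 else 0)
    (b : Fin T → Fin r → Fin K)
    (hb : Function.Injective fun p : Fin T × Fin r => b p.1 p.2)
    (FX : Matrix (Fin L) (Fin K) PatEntry)
    (G : Matrix (Fin r) (Fin K) 𝔽) (D : Matrix (Fin L) (Fin r) 𝔽)
    (hDG : Fits FX (D * G))
    (hcomm : ∀ i : Fin T,
      (Matrix.of fun s k => G s (b i k)) * C = C * Matrix.of fun s k => G s (b i k))
    (B : Matrix (Fin L) (Fin K) PatEntry)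
    (hBdef : ∀ l j, B l j =
      if ∃ i k, j = b i k ∧ FX l (b i (σ k)) = some false then some false else none) :
    Fits (Matrix.fromBlocks FX B B FX)
      (Matrix.fromRows D (D * C) * Matrix.fromCols G (C * G)) ∧
    (∃ D' : Matrix (Fin L ⊕ Fin L) (Fin r) 𝔽,
        Fits (Matrix.fromBlocks FX B B FX) (D' * Matrix.fromCols G (C * G))) ∧
    (r = minrk 𝔽 FX →
        minrk 𝔽 (Matrix.fromBlocks FX B B FX) = minrk 𝔽 FX) :=
  two_order_extension_of_commuting_blocks_general σ hσ C hC b FX G D hDG hcomm B hBdef
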